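/- arXiv:2502.00216 — 5 statements merged into one kernel-verified Lean document; each statement's English description precedes it below -/
import Mathlib

section
/- Let (H₀, H₁) be a Hilbert space pair with dense continuous injection ι : H₁ → H₀, and for x ∈ H₀ let ‖x‖₋₁ denote the operator norm of the continuous linear functional a ↦ ⟪x, ι a⟫₀ on H₁. Assume the representation hypothesis (R): for every C ≥ 0 and every linear functional f : H₀ → ℝ satisfying |f x| ≤ C‖x‖₋₁ for all x ∈ H₀, there exists b ∈ H₁ with ‖b‖₁ ≤ C and f x = ⟪ι b, x⟫₀ for all x ∈ H₀. Let T ∈ L(H₀) and κ ≥ 0 satisfy ‖T x‖₋₁ ≤ κ‖x‖₋₁ for all x ∈ H₀. Then the Hilbert space adjoint T† of T maps the range of ι into the range of ι; more precisely, for every a ∈ H₁ there exists b ∈ H₁ with T†(ι a) = ι b and ‖b‖₁ ≤ κ‖a‖₁. -/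
/-!
For `a ∈ H₁` the functional `x ↦ ⟪ι a, T x⟫` satisfies
`|⟪ι a, T x⟫| ≤ ‖T x‖₋₁ ‖a‖ ≤ κ ‖a‖ ‖x‖₋₁`, so (R) represents it as `x ↦ ⟪ι b, x⟫` with
`‖b‖ ≤ κ ‖a‖`; and `⟪ι a, T x⟫ = ⟪ι b, x⟫` for all `x` says exactly `T† (ι a) = ι b`.
-/

open RealInnerProductSpace

theorem ContinuousLinearMap.adjoint_apply_eq_of_forall_inner {E F : Type*}
    [NormedAddCommGroup E] [InnerProductSpace ℝ E] [CompleteSpace E]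
    [NormedAddCommGroup F] [InnerProductSpace ℝ F] [CompleteSpace F]
    (T : E →L[ℝ] F) {y : F} {z : E} (h : ∀ x, ⟪y, T x⟫ = ⟪z, x⟫) :
    adjoint T y = z :=
  ext_inner_right ℝ fun x => by rw [adjoint_inner_left, h]

theorem floer_adjoint_preserves_H1_general
    {H₀ H₁ : Type*}
    [NormedAddCommGroup H₀] [InnerProductSpace ℝ H₀] [CompleteSpace H₀]
    [NormedAddCommGroup H₁] [InnerProductSpace ℝ H₁] [CompleteSpace H₁]
    (ι : H₁ →L[ℝ] H₀)
    -- the `H₋₁`-norm of `x ∈ H₀`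
    (nm : H₀ → ℝ) (hnm : ∀ x : H₀, nm x = ‖((innerSL ℝ) x).comp ι‖)
    -- representation hypothesis (R): isometric identification of `H₋₁*` with `H₁`
    (hR : ∀ (C : ℝ), 0 ≤ C → ∀ f : H₀ →ₗ[ℝ] ℝ,
      (∀ x : H₀, |f x| ≤ C * nm x) →
      ∃ b : H₁, ‖b‖ ≤ C ∧ ∀ x : H₀, f x = ⟪ι b, x⟫)
    (T : H₀ →L[ℝ] H₀) (κ : ℝ) (hκ : 0 ≤ κ)
    (hT : ∀ x : H₀, nm (T x) ≤ κ * nm x) :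
    ∀ a : H₁, ∃ b : H₁,
      (ContinuousLinearMap.adjoint T) (ι a) = ι b ∧ ‖b‖ ≤ κ * ‖a‖ := by
  intro a
  have hbound : ∀ x, |⟪ι a, T x⟫| ≤ κ * ‖a‖ * nm x := fun x =>
    calc |⟪ι a, T x⟫| = |((innerSL ℝ (T x)).comp ι) a| := by simp [real_inner_comm]
      _ ≤ nm (T x) * ‖a‖ := hnm (T x) ▸ ((innerSL ℝ (T x)).comp ι).le_opNorm a
      _ ≤ κ * nm x * ‖a‖ := by gcongr; exact hT x
      _ = κ * ‖a‖ * nm x := by ring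
  obtain ⟨b, hb, hrep⟩ :=
    hR (κ * ‖a‖) (by positivity) ((innerₛₗ ℝ (ι a)).comp T.toLinearMap) hbound
  exact ⟨b, T.adjoint_apply_eq_of_forall_inner hrep, hb⟩

/-- Corollary on adjoints: if `T ∈ L(H₀)` is bounded for the `H₋₁`-norm,
then its Hilbert space adjoint maps the range of `ι` into itself, with the
corresponding `H₁`-bound. -/
theorem floer_adjoint_preserves_H1
    {H₀ H₁ : Type*}
    [NormedAddCommGroup H₀] [InnerProductSpace ℝ H₀] [CompleteSpace H₀]
    [NormedAddCommGroup H₁] [InnerProductSpace ℝ H₁] [CompleteSpace H₁]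
    (ι : H₁ →L[ℝ] H₀) (hι : Function.Injective ι) (hdense : DenseRange ι)
    -- the `H₋₁`-norm of `x ∈ H₀`
    (nm : H₀ → ℝ) (hnm : ∀ x : H₀, nm x = ‖((innerSL ℝ) x).comp ι‖)
    -- representation hypothesis (R): isometric identification of `H₋₁*` with `H₁`
    (hR : ∀ (C : ℝ), 0 ≤ C → ∀ f : H₀ →ₗ[ℝ] ℝ,
      (∀ x : H₀, |f x| ≤ C * nm x) →
      ∃ b : H₁, ‖b‖ ≤ C ∧ ∀ x : H₀, f x = ⟪ι b, x⟫)
    (T : H₀ →L[ℝ] H₀) (κ : ℝ) (hκ : 0 ≤ κ)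
    (hT : ∀ x : H₀, nm (T x) ≤ κ * nm x) :
    ∀ a : H₁, ∃ b : H₁,
      (ContinuousLinearMap.adjoint T) (ι a) = ι b ∧ ‖b‖ ≤ κ * ‖a‖ :=
  floer_adjoint_preserves_H1_general ι nm hnm hR T κ hκ hT
end

section
/- Let (H₀, H₁) be a Hilbert space pair with dense continuous injection ι : H₁ → H₀, and for x ∈ H₀ let ‖x‖₋₁ denote the operator norm of the continuous linear functional a ↦ ⟪x, ι a⟫₀ on H₁. Assume the representation hypothesis (R): for every C ≥ 0 and every linear functional f : H₀ → ℝ satisfying |f x| ≤ C‖x‖₋₁ for all x ∈ H₀, there exists b ∈ H₁ with ‖b‖₁ ≤ C and f x = ⟪ι b, x⟫₀ for all x ∈ H₀. Let B : H₀ × H₀ → ℝ be a continuous bilinear map and K ∈ L(H₀) the operator given by the Riesz representation, i.e. B(ξ, η) = ⟪K ξ, η⟫₀ for all ξ, η ∈ H₀. Suppose there is κ > 0 such that |B(ι ξ, η)| ≤ κ ‖ξ‖₁ ‖η‖₋₁ for all ξ ∈ H₁ and η ∈ H₀. Then for every ξ ∈ H₁ there exists ζ ∈ H₁ with K(ι ξ)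 = ι ζ and ‖ζ‖₁ ≤ κ ‖ξ‖₁; that is, K restricts to a bounded linear operator on H₁ of operator norm at most κ. -/
open RealInnerProductSpace

theorem floer_riesz_operator_restricts_general
    {H₀ H₁ : Type*}
    [NormedAddCommGroup H₀] [InnerProductSpace ℝ H₀] [CompleteSpace H₀]
    [NormedAddCommGroup H₁] [InnerProductSpace ℝ H₁] [CompleteSpace H₁]
    (ι : H₁ →L[ℝ] H₀)
    -- the `H₋₁`-norm of `x ∈ H₀`
    (nm : H₀ → ℝ)
    -- representation hypothesis (R): isometric identification of `H₋₁*` with `H₁`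
    (hR : ∀ (C : ℝ), 0 ≤ C → ∀ f : H₀ →ₗ[ℝ] ℝ,
      (∀ x : H₀, |f x| ≤ C * nm x) →
      ∃ b : H₁, ‖b‖ ≤ C ∧ ∀ x : H₀, f x = ⟪ι b, x⟫)
    (B : H₀ →L[ℝ] H₀ →L[ℝ] ℝ) (K : H₀ →L[ℝ] H₀)
    (hK : ∀ ξ η : H₀, B ξ η = ⟪K ξ, η⟫)
    (κ : ℝ) (hκ : 0 < κ)
    (hB : ∀ (ξ : H₁) (η : H₀), |B (ι ξ) η| ≤ κ * ‖ξ‖ * nm η) :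
    ∀ ξ : H₁, ∃ ζ : H₁, K (ι ξ) = ι ζ ∧ ‖ζ‖ ≤ κ * ‖ξ‖ := by
  intro ξ
  obtain ⟨ζ, hζ, hrep⟩ := hR (κ * ‖ξ‖) (by positivity) (B (ι ξ)).toLinearMap (hB ξ)
  refine ⟨ζ, ext_inner_right ℝ fun η => ?_, hζ⟩
  rw [← hK]
  exact hrep η

/-- Lemma on the Riesz operator of a bilinear form with a mixed `(1,−1)` bound:
the Riesz operator `K` of `B` restricts to a bounded linear operator on `H₁`
of operator norm at most `κ`. -/
theorem floer_riesz_operator_restricts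
    {H₀ H₁ : Type*}
    [NormedAddCommGroup H₀] [InnerProductSpace ℝ H₀] [CompleteSpace H₀]
    [NormedAddCommGroup H₁] [InnerProductSpace ℝ H₁] [CompleteSpace H₁]
    (ι : H₁ →L[ℝ] H₀) (hι : Function.Injective ι) (hdense : DenseRange ι)
    -- the `H₋₁`-norm of `x ∈ H₀`
    (nm : H₀ → ℝ) (hnm : ∀ x : H₀, nm x = ‖((innerSL ℝ) x).comp ι‖)
    -- representation hypothesis (R): isometric identification of `H₋₁*` with `H₁`
    (hR : ∀ (C : ℝ), 0 ≤ C → ∀ f : H₀ →ₗ[ℝ] ℝ,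
      (∀ x : H₀, |f x| ≤ C * nm x) →
      ∃ b : H₁, ‖b‖ ≤ C ∧ ∀ x : H₀, f x = ⟪ι b, x⟫)
    (B : H₀ →L[ℝ] H₀ →L[ℝ] ℝ) (K : H₀ →L[ℝ] H₀)
    (hK : ∀ ξ η : H₀, B ξ η = ⟪K ξ, η⟫)
    (κ : ℝ) (hκ : 0 < κ)
    (hB : ∀ (ξ : H₁) (η : H₀), |B (ι ξ) η| ≤ κ * ‖ξ‖ * nm η) :
    ∀ ξ : H₁, ∃ ζ : H₁, K (ι ξ) = ι ζ ∧ ‖ζ‖ ≤ κ * ‖ξ‖ :=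
  floer_riesz_operator_restricts_general ι nm hR B K hK κ hκ hB
end

section
/- Let (H₀, H₁) be a Hilbert space pair with dense continuous injection ι : H₁ → H₀. Let U and V be open subsets of H₁, let φ : U → V be of class C¹, and let Dφ : U → L(H₀) be a continuously differentiable map satisfying Dφ(q) ∘ ι = ι ∘ (fderiv φ q) for every q ∈ U. Let f : V → ℝ be of class C¹ and let g : V → H₀ be a continuously differentiable map satisfying (fderiv f p)(ξ) = ⟪g(p), ι ξ⟫₀ for all p ∈ V and ξ ∈ H₁. Then the map q ↦ (Dφ(q))† (g(φ(q))), where (Dφ(q))† denotes the H₀-adjoint of Dφ(q), is a continuously differentiable map from U to H₀ and is an H₀-gradient of f ∘ φ, i.e. (fderiv (f ∘ φ) q)(ξ) = ⟪(Dφ(q))† g(φ(q)), ι ξ⟫₀ for all q ∈ U and ξ ∈ H₁. -/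
open RealInnerProductSpace

def IsFloerGradient {H₀ H₁ : Type*} [NormedAddCommGroup H₀] [InnerProductSpace ℝ H₀]
    [NormedAddCommGroup H₁] [NormedSpace ℝ H₁]
    (ι : H₁ →L[ℝ] H₀) (U : Set H₁) (f : H₁ → ℝ) (g : H₁ → H₀) : Prop :=
  ∀ p ∈ U, ∀ ξ : H₁, fderiv ℝ f p ξ = ⟪g p, ι ξ⟫

theorem ContDiffOn.adjoint_apply {E F G : Type*}
    [NormedAddCommGroup E] [InnerProductSpace ℝ E] [CompleteSpace E]
    [NormedAddCommGroup F] [InnerProductSpace ℝ F] [CompleteSpace F]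
    [NormedAddCommGroup G] [NormedSpace ℝ G]
    {A : G → E →L[ℝ] F} {v : G → F} {s : Set G} {n : WithTop ℕ∞}
    (hA : ContDiffOn ℝ n A s) (hv : ContDiffOn ℝ n v s) :
    ContDiffOn ℝ n (fun x => ContinuousLinearMap.adjoint (A x) (v x)) s :=
  have hadj : ContDiffOn ℝ n (fun x => ContinuousLinearMap.adjoint (A x)) s :=
    (ContinuousLinearMap.adjoint : (E →L[ℝ] F) ≃ₗᵢ[ℝ] (F →L[ℝ] E)).contDiff.comp_contDiffOn hA
  hadj.clm_apply hv

theorem inner_adjoint_apply_of_comp_eq {H₀ H₁ : Type*}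
    [NormedAddCommGroup H₀] [InnerProductSpace ℝ H₀] [CompleteSpace H₀]
    [NormedAddCommGroup H₁] [NormedSpace ℝ H₁]
    {ι : H₁ →L[ℝ] H₀} {A : H₀ →L[ℝ] H₀} {L : H₁ →L[ℝ] H₁}
    (h : A.comp ι = ι.comp L) (u : H₀) (ξ : H₁) :
    ⟪ContinuousLinearMap.adjoint A u, ι ξ⟫ = ⟪u, ι (L ξ)⟫ := by
  rw [ContinuousLinearMap.adjoint_inner_left, ← ContinuousLinearMap.comp_apply, h,
    ContinuousLinearMap.comp_apply]

theorem IsFloerGradient.comp {H₀ H₁ : Type*}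
    [NormedAddCommGroup H₀] [InnerProductSpace ℝ H₀] [CompleteSpace H₀]
    [NormedAddCommGroup H₁] [NormedSpace ℝ H₁]
    {ι : H₁ →L[ℝ] H₀} {U V : Set H₁} {φ : H₁ → H₁} {Dφ : H₁ → H₀ →L[ℝ] H₀}
    {f : H₁ → ℝ} {g : H₁ → H₀}
    (hgrad : IsFloerGradient ι V f g) (hφUV : Set.MapsTo φ U V)
    (hφ : ∀ q ∈ U, DifferentiableAt ℝ φ q) (hf : ∀ p ∈ V, DifferentiableAt ℝ f p)
    (hext : ∀ q ∈ U, (Dφ q).comp ι = ι.comp (fderiv ℝ φ q)) :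
    IsFloerGradient ι U (f ∘ φ) (fun q => ContinuousLinearMap.adjoint (Dφ q) (g (φ q))) := by
  intro q hq ξ
  calc fderiv ℝ (f ∘ φ) q ξ = fderiv ℝ f (φ q) (fderiv ℝ φ q ξ) := by
        rw [fderiv_comp q (hf _ (hφUV hq)) (hφ q hq), ContinuousLinearMap.comp_apply]
    _ = ⟪g (φ q), ι (fderiv ℝ φ q ξ)⟫ := hgrad _ (hφUV hq) _
    _ = ⟪ContinuousLinearMap.adjoint (Dφ q) (g (φ q)), ι ξ⟫ :=
        (inner_adjoint_apply_of_comp_eq (hext q hq) _ _).symm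

theorem floer_gradient_pullback_general
    {H₀ H₁ : Type*}
    [NormedAddCommGroup H₀] [InnerProductSpace ℝ H₀] [CompleteSpace H₀]
    [NormedAddCommGroup H₁] [InnerProductSpace ℝ H₁]
    (ι : H₁ →L[ℝ] H₀)
    (U V : Set H₁) (hU : IsOpen U) (hV : IsOpen V)
    (φ : H₁ → H₁) (hφUV : Set.MapsTo φ U V) (hφ : ContDiffOn ℝ 1 φ U)
    (Dφ : H₁ → H₀ →L[ℝ] H₀) (hDφ : ContDiffOn ℝ 1 Dφ U)
    (hext : ∀ q ∈ U, (Dφ q).comp ι = ι.comp (fderiv ℝ φ q))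
    (f : H₁ → ℝ) (hf : ContDiffOn ℝ 1 f V)
    (g : H₁ → H₀) (hg : ContDiffOn ℝ 1 g V)
    (hgrad : ∀ p ∈ V, ∀ ξ : H₁, fderiv ℝ f p ξ = ⟪g p, ι ξ⟫) :
    ContDiffOn ℝ 1
      (fun q => (ContinuousLinearMap.adjoint (Dφ q)) (g (φ q))) U ∧
    ∀ q ∈ U, ∀ ξ : H₁,
      fderiv ℝ (f ∘ φ) q ξ
        = ⟪(ContinuousLinearMap.adjoint (Dφ q)) (g (φ q)), ι ξ⟫ :=
  ⟨hDφ.adjoint_apply (hg.comp hφ hφUV),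
    IsFloerGradient.comp hgrad hφUV
      (fun _ hq => (hφ.differentiableOn one_ne_zero).differentiableAt (hU.mem_nhds hq))
      (fun _ hp => (hf.differentiableOn one_ne_zero).differentiableAt (hV.mem_nhds hp))
      hext⟩

/-- Step 1 of the pull-back theorem: `q ↦ (Dφ q)† (g (φ q))` is a continuously
differentiable `H₀`-gradient of `f ∘ φ`. -/
theorem floer_gradient_pullback
    {H₀ H₁ : Type*}
    [NormedAddCommGroup H₀] [InnerProductSpace ℝ H₀] [CompleteSpace H₀]
    [NormedAddCommGroup H₁] [InnerProductSpace ℝ H₁] [CompleteSpace H₁]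
    (ι : H₁ →L[ℝ] H₀) (hι : Function.Injective ι) (hdense : DenseRange ι)
    (U V : Set H₁) (hU : IsOpen U) (hV : IsOpen V)
    (φ : H₁ → H₁) (hφUV : Set.MapsTo φ U V) (hφ : ContDiffOn ℝ 1 φ U)
    (Dφ : H₁ → H₀ →L[ℝ] H₀) (hDφ : ContDiffOn ℝ 1 Dφ U)
    (hext : ∀ q ∈ U, (Dφ q).comp ι = ι.comp (fderiv ℝ φ q))
    (f : H₁ → ℝ) (hf : ContDiffOn ℝ 1 f V)
    (g : H₁ → H₀) (hg : ContDiffOn ℝ 1 g V)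
    (hgrad : ∀ p ∈ V, ∀ ξ : H₁, fderiv ℝ f p ξ = ⟪g p, ι ξ⟫) :
    ContDiffOn ℝ 1
      (fun q => (ContinuousLinearMap.adjoint (Dφ q)) (g (φ q))) U ∧
    ∀ q ∈ U, ∀ ξ : H₁,
      fderiv ℝ (f ∘ φ) q ξ
        = ⟪(ContinuousLinearMap.adjoint (Dφ q)) (g (φ q)), ι ξ⟫ :=
  floer_gradient_pullback_general ι U V hU hV φ hφUV hφ Dφ hDφ hext f hf g hg hgrad
end

section
/- Let (H₀, H₁) be a Hilbert space pair with dense continuous injection ι : H₁ → H₀. Let U and V be open subsets of H₁ and let φ : U → V be of class C². Suppose for each q ∈ U there are an operator Dφ(q) ∈ L(H₀) with Dφ(q) ∘ ι = ι ∘ (fderiv φ q), and a continuous bilinear map D²φ(q) : H₀ × H₀ → H₀ with D²φ(q)(ι ξ, ι η) = ι((fderiv² φ q)(ξ, η)) for all ξ, η ∈ H₁. Let f : V → ℝ be of class C², let g : V → H₀ satisfy (fderiv f p)(ξ) = ⟪g(p), ι ξ⟫₀ for all p ∈ V, ξ ∈ H₁, and let A : V → L(H₁, H₀) satisfy (fderiv²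 f p)(ξ, η) = ⟪A(p) ξ, ι η⟫₀ for all p ∈ V, ξ, η ∈ H₁. For q ∈ U let K(q) ∈ L(H₀) be the operator with ⟪K(q) x, y⟫₀ = ⟪g(φ(q)), D²φ(q)(x, y)⟫₀ for all x, y ∈ H₀. Then for every q ∈ U and all ξ, η ∈ H₁ one has (fderiv² (f ∘ φ) q)(ξ, η) = ⟪(Dφ(q))† (A(φ(q)) ((fderiv φ q) ξ)) + K(q)(ι ξ), ι η⟫₀, where (Dφ(q))† denotes the H₀-adjoint; that is, the operator ξ ↦ (Dφ(q))† A(φ(q)) (fderiv φ q) ξ + K(q) ι ξ is a Hessian representation of f ∘ φ with respect to the H₀ inner product. -/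
/-!
Differentiating the chain rule `D(f ∘ φ) = (Df ∘ φ) · Dφ` once more gives
`D²(f ∘ φ)(ξ, η) = Df (D²φ(ξ, η)) + D²f (Dφ ξ, Dφ η)`. The representations of `Df` by `g`,
of `D²f` by `A`, and the intertwining `Dφ ∘ ι = ι ∘ dφ`, `D²φ(ι ·, ι ·) = ι ∘ d²φ`, turn the first
term into `⟪K ι ξ, ι η⟫₀` and the second into `⟪(Dφ)† A dφ ξ, ι η⟫₀`.
-/

open RealInnerProductSpace

section SecondDerivativeChainRule

variable {E F G : Type*}
  [NormedAddCommGroup E] [NormedSpace ℝ E] [NormedAddCommGroup F] [NormedSpace ℝ F]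
  [NormedAddCommGroup G] [NormedSpace ℝ G]

theorem fderiv_fderiv_comp_apply {f : F → G} {φ : E → F} {q : E}
    (hf : ContDiffAt ℝ 2 f (φ q)) (hφ : ContDiffAt ℝ 2 φ q) (ξ η : E) :
    fderiv ℝ (fderiv ℝ (f ∘ φ)) q ξ η
      = fderiv ℝ f (φ q) (fderiv ℝ (fderiv ℝ φ) q ξ η)
        + fderiv ℝ (fderiv ℝ f) (φ q) (fderiv ℝ φ q ξ) (fderiv ℝ φ q η) := by
  have hfderiv_comp :
      fderiv ℝ (f ∘ φ) =ᶠ[nhds q] fun x => (fderiv ℝ f (φ x)).comp (fderiv ℝ φ x) := by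
    filter_upwards [hφ.eventually (by simp),
      hφ.continuousAt.eventually (hf.eventually (by simp))] with x hφx hfx
    exact fderiv_comp x (hfx.differentiableAt (by simp)) (hφx.differentiableAt (by simp))
  have hD2f : HasFDerivAt (fderiv ℝ f) (fderiv ℝ (fderiv ℝ f) (φ q)) (φ q) :=
    ((hf.fderiv_right (m := 1) le_rfl).differentiableAt one_ne_zero).hasFDerivAt
  have hD2φ : HasFDerivAt (fderiv ℝ φ) (fderiv ℝ (fderiv ℝ φ) q) q :=
    ((hφ.fderiv_right (m := 1) le_rfl).differentiableAt one_ne_zero).hasFDerivAt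
  have hDφ : HasFDerivAt φ (fderiv ℝ φ q) q := (hφ.differentiableAt (by simp)).hasFDerivAt
  rw [(((hD2f.comp q hDφ).clm_comp hD2φ).congr_of_eventuallyEq hfderiv_comp).fderiv]
  simp

end SecondDerivativeChainRule

theorem floer_hessian_pullback_general
    {H₀ H₁ : Type*}
    [NormedAddCommGroup H₀] [InnerProductSpace ℝ H₀] [CompleteSpace H₀]
    [NormedAddCommGroup H₁] [InnerProductSpace ℝ H₁]
    (ι : H₁ →L[ℝ] H₀)
    (U V : Set H₁) (hU : IsOpen U) (hV : IsOpen V)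
    (φ : H₁ → H₁) (hφUV : Set.MapsTo φ U V) (hφ : ContDiffOn ℝ 2 φ U)
    (Dφ : H₁ → H₀ →L[ℝ] H₀)
    (hDφ : ∀ q ∈ U, (Dφ q).comp ι = ι.comp (fderiv ℝ φ q))
    (D2φ : H₁ → H₀ →L[ℝ] H₀ →L[ℝ] H₀)
    (hD2φ : ∀ q ∈ U, ∀ ξ η : H₁,
      D2φ q (ι ξ) (ι η) = ι (fderiv ℝ (fderiv ℝ φ) q ξ η))
    (f : H₁ → ℝ) (hf : ContDiffOn ℝ 2 f V)
    (g : H₁ → H₀)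
    (hg : ∀ p ∈ V, ∀ ξ : H₁, fderiv ℝ f p ξ = ⟪g p, ι ξ⟫)
    (A : H₁ → H₁ →L[ℝ] H₀)
    (hA : ∀ p ∈ V, ∀ ξ η : H₁,
      fderiv ℝ (fderiv ℝ f) p ξ η = ⟪A p ξ, ι η⟫)
    (K : H₁ → H₀ →L[ℝ] H₀)
    (hK : ∀ q ∈ U, ∀ x y : H₀, ⟪K q x, y⟫ = ⟪g (φ q), D2φ q x y⟫) :
    ∀ q ∈ U, ∀ ξ η : H₁,
      fderiv ℝ (fderiv ℝ (f ∘ φ)) q ξ η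
        = ⟪(ContinuousLinearMap.adjoint (Dφ q)) (A (φ q) ((fderiv ℝ φ q) ξ))
            + K q (ι ξ), ι η⟫ := by
  intro q hq ξ η
  have hφq : φ q ∈ V := hφUV hq
  have hDφη : Dφ q (ι η) = ι (fderiv ℝ φ q η) := DFunLike.congr_fun (hDφ q hq) η
  rw [fderiv_fderiv_comp_apply (hf.contDiffAt (hV.mem_nhds hφq)) (hφ.contDiffAt (hU.mem_nhds hq)),
    inner_add_left, ContinuousLinearMap.adjoint_inner_left, hDφη, hK q hq, hD2φ q hq,
    ← hA _ hφq, ← hg _ hφq, add_comm]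

/-- Step 2 of the pull-back theorem: the Hessian identity
`d²(f∘φ)|_q(ξ,η) = ⟪(Dφ|_q)* A^{φ(q)} dφ|_q ξ + K^q ι ξ, ι η⟫₀`. -/
theorem floer_hessian_pullback
    {H₀ H₁ : Type*}
    [NormedAddCommGroup H₀] [InnerProductSpace ℝ H₀] [CompleteSpace H₀]
    [NormedAddCommGroup H₁] [InnerProductSpace ℝ H₁] [CompleteSpace H₁]
    (ι : H₁ →L[ℝ] H₀) (hι : Function.Injective ι) (hdense : DenseRange ι)
    (U V : Set H₁) (hU : IsOpen U) (hV : IsOpen V)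
    (φ : H₁ → H₁) (hφUV : Set.MapsTo φ U V) (hφ : ContDiffOn ℝ 2 φ U)
    (Dφ : H₁ → H₀ →L[ℝ] H₀)
    (hDφ : ∀ q ∈ U, (Dφ q).comp ι = ι.comp (fderiv ℝ φ q))
    (D2φ : H₁ → H₀ →L[ℝ] H₀ →L[ℝ] H₀)
    (hD2φ : ∀ q ∈ U, ∀ ξ η : H₁,
      D2φ q (ι ξ) (ι η) = ι (fderiv ℝ (fderiv ℝ φ) q ξ η))
    (f : H₁ → ℝ) (hf : ContDiffOn ℝ 2 f V)
    (g : H₁ → H₀)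
    (hg : ∀ p ∈ V, ∀ ξ : H₁, fderiv ℝ f p ξ = ⟪g p, ι ξ⟫)
    (A : H₁ → H₁ →L[ℝ] H₀)
    (hA : ∀ p ∈ V, ∀ ξ η : H₁,
      fderiv ℝ (fderiv ℝ f) p ξ η = ⟪A p ξ, ι η⟫)
    (K : H₁ → H₀ →L[ℝ] H₀)
    (hK : ∀ q ∈ U, ∀ x y : H₀, ⟪K q x, y⟫ = ⟪g (φ q), D2φ q x y⟫) :
    ∀ q ∈ U, ∀ ξ η : H₁,
      fderiv ℝ (fderiv ℝ (f ∘ φ)) q ξ η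
        = ⟪(ContinuousLinearMap.adjoint (Dφ q)) (A (φ q) ((fderiv ℝ φ q) ξ))
            + K q (ι ξ), ι η⟫ :=
  floer_hessian_pullback_general ι U V hU hV φ hφUV hφ Dφ hDφ D2φ hD2φ f hf g hg A hA K hK
end

section
/- Let (H₀, H₁) be a Hilbert space pair with dense continuous injection ι : H₁ → H₀. Let U, V, W be open subsets of H₁ and let φ : U → V and ψ : V → W be C² maps. Suppose there are continuous maps Dφ : U → L(H₀), Dψ : V → L(H₀) with Dφ(q) ∘ ι = ι ∘ (fderiv φ q) and Dψ(p) ∘ ι = ι ∘ (fderiv ψ p), and continuous maps D²φ : U → L(H₀, H₀; H₀), D²ψ : V → L(H₀, H₀; H₀) into the space of continuous bilinear maps H₀ × H₀ → H₀ such that D²φ(q)(ι ξ, ι η) = ι((fderiv² φ q)(ξ, η)) and D²ψ(p)(ι ξ, ι η) = ι((fderiv² ψ p)(ξ, η)) for all ξ, η ∈ H₁. Then the map assigning to q ∈ U the bilinear map (x, y) ↦ D²ψ(φ(q))(Dφ(q) x, Dφ(q) y) + Dψ(φ(q))(D²φ(q)(x, y)) is a continuous map from U to L(H₀, H₀; H₀),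 and for every q ∈ U it extends the second derivative of the composition: evaluated at (ι ξ, ι η) it equals ι((fderiv² (ψ ∘ φ) q)(ξ, η)) for all ξ, η ∈ H₁. -/
/-! Differentiating `D(ψ ∘ φ) = (Dψ ∘ φ) · Dφ` once more by the product and chain rules gives
`D²(ψ ∘ φ) = D²ψ(Dφ ·, Dφ ·) + Dψ ∘ D²φ` on `H₁`; since `Dφ`, `Dψ`, `D²φ`, `D²ψ` restrict along `ι`
to the derivatives of `φ` and `ψ`, the formula on `H₀` restricts to it. Continuity holds because
composition of continuous linear and bilinear maps is jointly continuous. -/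

open RealInnerProductSpace
open Filter Topology

section

variable {𝕜 : Type*} [NontriviallyNormedField 𝕜]
  {E F G E' F' : Type*}
  [NormedAddCommGroup E] [NormedSpace 𝕜 E] [NormedAddCommGroup F] [NormedSpace 𝕜 F]
  [NormedAddCommGroup G] [NormedSpace 𝕜 G] [NormedAddCommGroup E'] [NormedSpace 𝕜 E']
  [NormedAddCommGroup F'] [NormedSpace 𝕜 F']

theorem ContinuousOn.clm_bilinearComp {X : Type*} [TopologicalSpace X] {s : Set X}
    {B : X → E →L[𝕜] F →L[𝕜] G} {f : X → E' →L[𝕜] E} {g : X → F' →L[𝕜] F}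
    (hB : ContinuousOn B s) (hf : ContinuousOn f s) (hg : ContinuousOn g s) :
    ContinuousOn (fun x => (B x).bilinearComp (f x) (g x)) s := by
  have hflip₁ := (ContinuousLinearMap.flipₗᵢ 𝕜 E' F G).continuous
  have hflip₂ := (ContinuousLinearMap.flipₗᵢ 𝕜 F' E' G).continuous
  exact hflip₂.comp_continuousOn ((hflip₁.comp_continuousOn (hB.clm_comp hf)).clm_comp hg)

theorem fderiv_fderiv_comp {f : E → F} {g : F → G} {x : E}
    (hg : ContDiffAt 𝕜 2 g (f x)) (hf : ContDiffAt 𝕜 2 f x) :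
    fderiv 𝕜 (fderiv 𝕜 (g ∘ f)) x =
      (fderiv 𝕜 (fderiv 𝕜 g) (f x)).bilinearComp (fderiv 𝕜 f x) (fderiv 𝕜 f x)
        + (ContinuousLinearMap.compL 𝕜 E F G (fderiv 𝕜 g (f x))).comp
          (fderiv 𝕜 (fderiv 𝕜 f) x) := by
  have hcomp : fderiv 𝕜 (g ∘ f) =ᶠ[𝓝 x] fun y => (fderiv 𝕜 g (f y)).comp (fderiv 𝕜 f y) := by
    filter_upwards [hf.eventually (by simp), hf.continuousAt.eventually (hg.eventually (by simp))]
      with y hfy hgy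
    exact fderiv_comp y (hgy.differentiableAt two_ne_zero) (hfy.differentiableAt two_ne_zero)
  have hg' : DifferentiableAt 𝕜 (fderiv 𝕜 g) (f x) :=
    (hg.fderiv_right one_add_one_eq_two.le).differentiableAt one_ne_zero
  have hf' : DifferentiableAt 𝕜 (fderiv 𝕜 f) x :=
    (hf.fderiv_right one_add_one_eq_two.le).differentiableAt one_ne_zero
  have hf₁ : DifferentiableAt 𝕜 f x := hf.differentiableAt two_ne_zero
  have hgf : DifferentiableAt 𝕜 (fun y => fderiv 𝕜 g (f y)) x := hg'.comp x hf₁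
  rw [hcomp.fderiv_eq, fderiv_clm_comp hgf hf', fderiv_fun_comp x hg' hf₁]
  ext v w
  simp [add_comm]

end

theorem floer_composition_second_derivative_general
    {H₀ H₁ : Type*}
    [NormedAddCommGroup H₀] [InnerProductSpace ℝ H₀]
    [NormedAddCommGroup H₁] [InnerProductSpace ℝ H₁]
    (ι : H₁ →L[ℝ] H₀)
    (U V : Set H₁) (hU : IsOpen U) (hV : IsOpen V)
    (φ ψ : H₁ → H₁) (hφUV : Set.MapsTo φ U V)
    (hφ : ContDiffOn ℝ 2 φ U) (hψ : ContDiffOn ℝ 2 ψ V)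
    (Dφ : H₁ → H₀ →L[ℝ] H₀) (Dψ : H₁ → H₀ →L[ℝ] H₀)
    (hDφcont : ContinuousOn Dφ U) (hDψcont : ContinuousOn Dψ V)
    (hDφ : ∀ q ∈ U, (Dφ q).comp ι = ι.comp (fderiv ℝ φ q))
    (hDψ : ∀ p ∈ V, (Dψ p).comp ι = ι.comp (fderiv ℝ ψ p))
    (D2φ : H₁ → H₀ →L[ℝ] H₀ →L[ℝ] H₀) (D2ψ : H₁ → H₀ →L[ℝ] H₀ →L[ℝ] H₀)
    (hD2φcont : ContinuousOn D2φ U) (hD2ψcont : ContinuousOn D2ψ V)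
    (hD2φ : ∀ q ∈ U, ∀ ξ η : H₁,
      D2φ q (ι ξ) (ι η) = ι (fderiv ℝ (fderiv ℝ φ) q ξ η))
    (hD2ψ : ∀ p ∈ V, ∀ ξ η : H₁,
      D2ψ p (ι ξ) (ι η) = ι (fderiv ℝ (fderiv ℝ ψ) p ξ η)) :
    ContinuousOn
      (fun q => (D2ψ (φ q)).bilinearComp (Dφ q) (Dφ q)
        + ((ContinuousLinearMap.compL ℝ H₀ H₀ H₀ (Dψ (φ q))).comp (D2φ q))) U ∧
    ∀ q ∈ U, ∀ ξ η : H₁,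
      ((D2ψ (φ q)).bilinearComp (Dφ q) (Dφ q)
        + ((ContinuousLinearMap.compL ℝ H₀ H₀ H₀ (Dψ (φ q))).comp (D2φ q)))
        (ι ξ) (ι η)
      = ι (fderiv ℝ (fderiv ℝ (ψ ∘ φ)) q ξ η) := by
  refine ⟨?_, fun q hq ξ η => ?_⟩
  · have hDψφ := hDψcont.comp hφ.continuousOn hφUV
    have hD2ψφ := hD2ψcont.comp hφ.continuousOn hφUV
    exact (hD2ψφ.clm_bilinearComp hDφcont hDφcont).add
      (((ContinuousLinearMap.compL ℝ H₀ H₀ H₀).continuous.comp_continuousOn hDψφ).clm_comp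
        hD2φcont)
  · have hφq : ContDiffAt ℝ 2 φ q := hφ.contDiffAt (hU.mem_nhds hq)
    have hψφq : ContDiffAt ℝ 2 ψ (φ q) := hψ.contDiffAt (hV.mem_nhds (hφUV hq))
    have hDφι (ζ : H₁) : Dφ q (ι ζ) = ι (fderiv ℝ φ q ζ) :=
      ContinuousLinearMap.ext_iff.mp (hDφ q hq) ζ
    have hDψι (ζ : H₁) : Dψ (φ q) (ι ζ) = ι (fderiv ℝ ψ (φ q) ζ) :=
      ContinuousLinearMap.ext_iff.mp (hDψ (φ q) (hφUV hq)) ζ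
    rw [fderiv_fderiv_comp hψφq hφq]
    simp only [add_apply, ContinuousLinearMap.bilinearComp_apply,
      ContinuousLinearMap.coe_comp, Function.comp_apply, ContinuousLinearMap.compL_apply,
      map_add]
    rw [hDφι, hDφι, hD2ψ _ (hφUV hq), hD2φ _ hq, hDψι]

/-- Second-derivative content (axiom (ii)₁ with `s = 0`) of the proposition
that the composition of Floer maps is a Floer map:
`D²(ψ∘φ)|_q = D²ψ|_{φ(q)}(Dφ|_q ·, Dφ|_q ·) + Dψ|_{φ(q)} ∘ D²φ|_q` is a
continuous map `U → L(H₀, H₀; H₀)` extending the second derivative of `ψ ∘ φ`. -/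
theorem floer_composition_second_derivative
    {H₀ H₁ : Type*}
    [NormedAddCommGroup H₀] [InnerProductSpace ℝ H₀] [CompleteSpace H₀]
    [NormedAddCommGroup H₁] [InnerProductSpace ℝ H₁] [CompleteSpace H₁]
    (ι : H₁ →L[ℝ] H₀) (hι : Function.Injective ι) (hdense : DenseRange ι)
    (U V W : Set H₁) (hU : IsOpen U) (hV : IsOpen V) (hW : IsOpen W)
    (φ ψ : H₁ → H₁) (hφUV : Set.MapsTo φ U V) (hψVW : Set.MapsTo ψ V W)
    (hφ : ContDiffOn ℝ 2 φ U) (hψ : ContDiffOn ℝ 2 ψ V)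
    (Dφ : H₁ → H₀ →L[ℝ] H₀) (Dψ : H₁ → H₀ →L[ℝ] H₀)
    (hDφcont : ContinuousOn Dφ U) (hDψcont : ContinuousOn Dψ V)
    (hDφ : ∀ q ∈ U, (Dφ q).comp ι = ι.comp (fderiv ℝ φ q))
    (hDψ : ∀ p ∈ V, (Dψ p).comp ι = ι.comp (fderiv ℝ ψ p))
    (D2φ : H₁ → H₀ →L[ℝ] H₀ →L[ℝ] H₀) (D2ψ : H₁ → H₀ →L[ℝ] H₀ →L[ℝ] H₀)
    (hD2φcont : ContinuousOn D2φ U) (hD2ψcont : ContinuousOn D2ψ V)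
    (hD2φ : ∀ q ∈ U, ∀ ξ η : H₁,
      D2φ q (ι ξ) (ι η) = ι (fderiv ℝ (fderiv ℝ φ) q ξ η))
    (hD2ψ : ∀ p ∈ V, ∀ ξ η : H₁,
      D2ψ p (ι ξ) (ι η) = ι (fderiv ℝ (fderiv ℝ ψ) p ξ η)) :
    ContinuousOn
      (fun q => (D2ψ (φ q)).bilinearComp (Dφ q) (Dφ q)
        + ((ContinuousLinearMap.compL ℝ H₀ H₀ H₀ (Dψ (φ q))).comp (D2φ q))) U ∧
    ∀ q ∈ U, ∀ ξ η : H₁,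
      ((D2ψ (φ q)).bilinearComp (Dφ q) (Dφ q)
        + ((ContinuousLinearMap.compL ℝ H₀ H₀ H₀ (Dψ (φ q))).comp (D2φ q)))
        (ι ξ) (ι η)
      = ι (fderiv ℝ (fderiv ℝ (ψ ∘ φ)) q ξ η) :=
  floer_composition_second_derivative_general ι U V hU hV φ ψ hφUV hφ hψ Dφ Dψ hDφcont hDψcont hDφ
    hDψ D2φ D2ψ hD2φcont hD2ψcont hD2φ hD2ψ
end
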